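/- Let (Ω, P) be a probability space, let {E_γ}_{γ∈Γ} and {F_δ}_{δ∈Δ} be finite partitions of an event C, and suppose A and B are events such that for all γ, δ: P(A ∩ E_γ ∩ F_δ) = a(γ)·P(E_γ ∩ F_δ) and P(B ∩ E_γ ∩ F_δ) = b(δ)·P(E_γ ∩ F_δ), P(A ∩ B ∩ E_γ ∩ F_δ) = a(γ)·b(δ)·P(E_γ ∩ F_δ), and moreover the events E_γ and F_δ are conditionally independent given C, i.e., P(E_γ ∩ F_δ ∣ C) = P(E_γ ∣ C)·P(F_δ ∣ C). Then A and B are conditionally independent given C: P(A ∩ B ∣ C) = P(A ∣ C)·P(B ∣ C). -/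
import Mathlib


open MeasureTheory
open scoped ENNReal

theorem cond_indep_of_partitions {Ω : Type} [MeasurableSpace Ω]
    (μ : Measure Ω) [IsProbabilityMeasure μ]
    {Γ Δ : Type} [Fintype Γ] [Fintype Δ]
    (E : Γ → Set Ω) (F : Δ → Set Ω) (A B C : Set Ω)
    (a : Γ → ℝ≥0∞) (b : Δ → ℝ≥0∞)
    (hA : MeasurableSet A) (hB : MeasurableSet B)
    (hE : ∀ γ, MeasurableSet (E γ)) (hF : ∀ δ, MeasurableSet (F δ))
    (hEdisj : Pairwise (Function.onFun Disjoint E))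
    (hFdisj : Pairwise (Function.onFun Disjoint F))
    (hEcover : (⋃ γ, E γ) = C) (hFcover : (⋃ δ, F δ) = C)
    (hC : 0 < μ C)
    (hAfac : ∀ γ δ, μ (A ∩ (E γ ∩ F δ)) = a γ * μ (E γ ∩ F δ))
    (hBfac : ∀ γ δ, μ (B ∩ (E γ ∩ F δ)) = b δ * μ (E γ ∩ F δ))
    (hABfac : ∀ γ δ, μ (A ∩ B ∩ (E γ ∩ F δ)) = a γ * b δ * μ (E γ ∩ F δ))
    (hcondindep : ∀ γ δ,
      μ (E γ ∩ F δ ∩ C) / μ C = (μ (E γ ∩ C) / μ C) * (μ (F δ ∩ C) / μ C)) :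
    μ (A ∩ B ∩ C) / μ C = (μ (A ∩ C) / μ C) * (μ (B ∩ C) / μ C) := by
  classical
  set c := μ C with hcdef
  have hcne : c ≠ 0 := hC.ne'
  have hctop : c ≠ ∞ := (measure_lt_top μ C).ne
  have hEsub : ∀ γ, E γ ⊆ C := fun γ => hEcover ▸ Set.subset_iUnion E γ
  have hFsub : ∀ δ, F δ ⊆ C := fun δ => hFcover ▸ Set.subset_iUnion F δ
  -- decomposition of X ∩ C over the product partition
  have key : ∀ X : Set Ω, MeasurableSet X →
      μ (X ∩ C) = ∑ γ, ∑ δ, μ (X ∩ (E γ ∩ F δ)) := by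
    intro X hX
    have hunion : X ∩ C = ⋃ p : Γ × Δ, X ∩ (E p.1 ∩ F p.2) := by
      ext x
      simp only [Set.mem_inter_iff, Set.mem_iUnion]
      constructor
      · rintro ⟨hx, hxC⟩
        obtain ⟨γ, hγ⟩ := Set.mem_iUnion.mp (hEcover ▸ hxC)
        obtain ⟨δ, hδ⟩ := Set.mem_iUnion.mp (hFcover ▸ hxC)
        exact ⟨(γ, δ), hx, hγ, hδ⟩
      · rintro ⟨p, hx, hE', hF'⟩
        exact ⟨hx, hEsub p.1 hE'⟩
    rw [hunion, measure_iUnion, tsum_fintype, Fintype.sum_prod_type]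
    · intro p q hpq
      rcases eq_or_ne p.1 q.1 with h1 | h1
      · have h2 : p.2 ≠ q.2 := fun h2 => hpq (Prod.ext h1 h2)
        exact (hFdisj h2).mono (fun x hx => hx.2.2) (fun x hx => hx.2.2)
      · exact (hEdisj h1).mono (fun x hx => hx.2.1) (fun x hx => hx.2.1)
    · intro p; exact hX.inter ((hE p.1).inter (hF p.2))
  have mE : ∀ γ, μ (E γ ∩ C) = ∑ δ, μ (E γ ∩ F δ) := by
    intro γ
    have h : E γ ∩ C = ⋃ δ, E γ ∩ F δ := by
      rw [← hFcover, Set.inter_iUnion]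
    rw [h, measure_iUnion, tsum_fintype]
    · intro δ δ' hne
      exact (hFdisj hne).mono (fun x hx => hx.2) (fun x hx => hx.2)
    · intro δ; exact (hE γ).inter (hF δ)
  have mF : ∀ δ, μ (F δ ∩ C) = ∑ γ, μ (E γ ∩ F δ) := by
    intro δ
    have h : F δ ∩ C = ⋃ γ, E γ ∩ F δ := by
      rw [Set.inter_comm, ← hEcover, Set.iUnion_inter]
    rw [h, measure_iUnion, tsum_fintype]
    · intro γ γ' hne
      exact (hEdisj hne).mono (fun x hx => hx.1) (fun x hx => hx.1)
    · intro γ; exact (hE γ).inter (hF δ)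
  -- factorization of cells
  have hm : ∀ γ δ, μ (E γ ∩ F δ) = μ (E γ ∩ C) * μ (F δ ∩ C) / c := by
    intro γ δ
    have hsub : E γ ∩ F δ ∩ C = E γ ∩ F δ :=
      Set.inter_eq_left.mpr (fun x hx => hEsub γ hx.1)
    have h := hcondindep γ δ
    rw [hsub] at h
    calc μ (E γ ∩ F δ) = μ (E γ ∩ F δ) / c * c :=
          (ENNReal.div_mul_cancel hcne hctop).symm
      _ = (μ (E γ ∩ C) / c * (μ (F δ ∩ C) / c)) * c := by rw [h]
      _ = μ (E γ ∩ C) * μ (F δ ∩ C) * c⁻¹ * (c⁻¹ * c) := by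
          rw [div_eq_mul_inv, div_eq_mul_inv]; ring
      _ = μ (E γ ∩ C) * μ (F δ ∩ C) / c := by
          rw [ENNReal.inv_mul_cancel hcne hctop, mul_one, div_eq_mul_inv]
  -- the three measures
  have hAC : μ (A ∩ C) = ∑ γ, a γ * μ (E γ ∩ C) := by
    rw [key A hA]
    refine Finset.sum_congr rfl fun γ _ => ?_
    rw [mE γ, Finset.mul_sum]
    exact Finset.sum_congr rfl fun δ _ => hAfac γ δ
  have hBC : μ (B ∩ C) = ∑ δ, b δ * μ (F δ ∩ C) := by
    rw [key B hB, Finset.sum_comm]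
    refine Finset.sum_congr rfl fun δ _ => ?_
    rw [mF δ, Finset.mul_sum]
    exact Finset.sum_congr rfl fun γ _ => hBfac γ δ
  have hABC : μ (A ∩ B ∩ C) =
      (∑ γ, a γ * μ (E γ ∩ C)) * (∑ δ, b δ * μ (F δ ∩ C)) / c := by
    rw [key (A ∩ B) (hA.inter hB), Finset.sum_mul_sum, div_eq_mul_inv,
      Finset.sum_mul]
    refine Finset.sum_congr rfl fun γ _ => ?_
    rw [Finset.sum_mul]
    refine Finset.sum_congr rfl fun δ _ => ?_
    rw [hABfac γ δ, hm γ δ, div_eq_mul_inv]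
    ring
  rw [hAC, hBC, hABC, div_eq_mul_inv, div_eq_mul_inv, div_eq_mul_inv,
    div_eq_mul_inv]
  ring
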